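/- arXiv:2302.05394 — 2 statements merged into one kernel-verified Lean document; each statement's English description precedes it below -/
import Mathlib

section
/- Let F(x,y) = (p_m(x) yᵐ + p₁(x) y + p₀(x), q_m(x) yᵐ + q₁(x) y + q₀(x)) be a real analytic non-singular map on the strip Σ = I × ℝ, with m > 1 an odd integer and with neither p_m nor q_m vanishing identically on I. If for every x ∈ I with d_{1m}(x) = 0 one has q_m(x) ≠ 0 and q₁(x) ≤ 0, then F is injective on Σ. -/
open Set Polynomial


lemma injOn_of_hasDerivAt_ne_zero {s : Set ℝ} (hs : s.OrdConnected) {f f' : ℝ → ℝ}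
    (hf : ∀ x ∈ s, HasDerivAt f (f' x) x) (h : ∀ x ∈ s, f' x ≠ 0) : Set.InjOn f s := by
  have key : ∀ a ∈ s, ∀ b ∈ s, a < b → f a ≠ f b := by
    intro a ha b hb hab heq
    have hIcc : Icc a b ⊆ s := hs.out ha hb
    obtain ⟨c, hc, hc0⟩ := exists_hasDerivAt_eq_zero hab
      (fun x hx => (hf x (hIcc hx)).continuousAt.continuousWithinAt) heq
      (fun x hx => hf x (hIcc (Ioo_subset_Icc_self hx)))
    exact h c (hIcc (Ioo_subset_Icc_self hc)) hc0
  intro a ha b hb hab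
  rcases lt_trichotomy a b with h' | h' | h'
  · exact absurd hab (key a ha b hb h')
  · exact h'
  · exact absurd hab.symm (key b hb a ha h')

lemma eq_of_hasDerivAt_zero {s : Set ℝ} (hs : s.OrdConnected) {f : ℝ → ℝ}
    (hf : ∀ x ∈ s, HasDerivAt f 0 x) : ∀ a ∈ s, ∀ b ∈ s, f a = f b := by
  have key : ∀ a ∈ s, ∀ b ∈ s, a < b → f a = f b := by
    intro a ha b hb hab
    have hIcc : Icc a b ⊆ s := hs.out ha hb
    obtain ⟨c, hc, hc0⟩ := exists_hasDerivAt_eq_slope f (fun _ => 0) hab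
      (fun x hx => (hf x (hIcc hx)).continuousAt.continuousWithinAt)
      (fun x hx => hf x (hIcc (Ioo_subset_Icc_self hx)))
    have hba : b - a ≠ 0 := by intro h0; linarith [hab]
    have := (div_eq_iff hba).mp hc0.symm
    linarith
  intro a ha b hb
  rcases lt_trichotomy a b with h' | h' | h'
  · exact key a ha b hb h'
  · rw [h']
  · exact (key b hb a ha h').symm

lemma exists_eval_zero_of_odd_natDegree (P : Polynomial ℝ) (h : Odd P.natDegree) :
    ∃ x : ℝ, P.eval x = 0 := by
  have key : ∀ (Q : Polynomial ℝ), Odd Q.natDegree → 0 ≤ Q.leadingCoeff →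
      ∃ x : ℝ, Q.eval x = 0 := by
    intro Q hQodd hQlc
    have hQdeg0 : Q.natDegree ≠ 0 := by rintro h0; rw [h0] at hQodd; simp at hQodd
    have hQdeg : 0 < Q.degree := natDegree_pos_iff_degree_pos.mp (Nat.pos_of_ne_zero hQdeg0)
    have htop : Filter.Tendsto (fun x => Q.eval x) Filter.atTop Filter.atTop :=
      Q.tendsto_atTop_of_leadingCoeff_nonneg hQdeg hQlc
    set R := Q.comp (-X) with hR
    have hRdeg : R.natDegree = Q.natDegree := by rw [hR, natDegree_comp]; simp
    have hRlc : R.leadingCoeff = -Q.leadingCoeff := by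
      rw [hR, leadingCoeff_comp (by simp)]
      simp [hQodd.neg_one_pow]
    have hRdegpos : 0 < R.degree :=
      natDegree_pos_iff_degree_pos.mp (hRdeg ▸ natDegree_pos_iff_degree_pos.mpr hQdeg)
    have hRbot : Filter.Tendsto (fun x => R.eval x) Filter.atTop Filter.atBot :=
      R.tendsto_atBot_of_leadingCoeff_nonpos hRdegpos (hRlc ▸ neg_nonpos.mpr hQlc)
    have hQR : ∀ x : ℝ, R.eval (-x) = Q.eval x := by
      intro x; rw [hR, eval_comp]; simp
    have hbot : Filter.Tendsto (fun x => Q.eval x) Filter.atBot Filter.atBot := by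
      have : (fun x : ℝ => Q.eval x) = (fun x => R.eval x) ∘ Neg.neg := by
        funext x; simp [Function.comp, ← hQR x]
      rw [this]
      exact hRbot.comp Filter.tendsto_neg_atBot_atTop
    obtain ⟨x, hx⟩ := (Q.continuous.surjective htop hbot) 0
    exact ⟨x, hx⟩
  rcases le_or_gt 0 P.leadingCoeff with hlc | hlc
  · exact key P h hlc
  · obtain ⟨x, hx⟩ := key (-P) (by simpa using h) (by simp; linarith)
    exact ⟨x, by simpa using hx⟩

noncomputable def clm2 (a b c d : ℝ) : ℝ × ℝ →L[ℝ] ℝ × ℝ :=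
  LinearMap.toContinuousLinearMap
    (Matrix.toLin (Module.Basis.finTwoProd ℝ) (Module.Basis.finTwoProd ℝ) !![a, b; c, d])

lemma clm2_apply (a b c d : ℝ) (v : ℝ × ℝ) :
    clm2 a b c d v = (a * v.1 + b * v.2, c * v.1 + d * v.2) := by
  simp [clm2, Matrix.toLin_finTwoProd_apply]

lemma clm2_det (a b c d : ℝ) : (clm2 a b c d).det = a * d - b * c := by
  rw [ContinuousLinearMap.det]
  rw [clm2]
  rw [LinearMap.coe_toContinuousLinearMap]
  rw [LinearMap.det_toLin]
  simp [Matrix.det_fin_two]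

lemma hasFDerivAt_polyF (p0 p1 pm q0 q1 qm : ℝ → ℝ) (m : ℕ) (x y : ℝ)
    (dp0 dp1 dpm dq0 dq1 dqm : ℝ)
    (h0 : HasDerivAt p0 dp0 x) (h1 : HasDerivAt p1 dp1 x) (hmm : HasDerivAt pm dpm x)
    (k0 : HasDerivAt q0 dq0 x) (k1 : HasDerivAt q1 dq1 x) (kmm : HasDerivAt qm dqm x) :
    HasFDerivAt (fun z : ℝ × ℝ => (pm z.1 * z.2 ^ m + p1 z.1 * z.2 + p0 z.1,
        qm z.1 * z.2 ^ m + q1 z.1 * z.2 + q0 z.1))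
      (clm2 (dpm * y ^ m + dp1 * y + dp0) ((m : ℝ) * pm x * y ^ (m - 1) + p1 x)
            (dqm * y ^ m + dq1 * y + dq0) ((m : ℝ) * qm x * y ^ (m - 1) + q1 x)) (x, y) := by
  have hfst : HasFDerivAt (fun z : ℝ × ℝ => z.1) (ContinuousLinearMap.fst ℝ ℝ ℝ) (x, y) :=
    hasFDerivAt_fst
  have hsnd : HasFDerivAt (fun z : ℝ × ℝ => z.2) (ContinuousLinearMap.snd ℝ ℝ ℝ) (x, y) :=
    hasFDerivAt_snd
  have hym : HasFDerivAt (fun z : ℝ × ℝ => z.2 ^ m)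
      (((m : ℝ) * y ^ (m - 1)) • ContinuousLinearMap.snd ℝ ℝ ℝ) (x, y) :=
    (hasDerivAt_pow m y).comp_hasFDerivAt (x, y) hsnd
  have Hpm : HasFDerivAt (fun z : ℝ × ℝ => pm z.1) (dpm • ContinuousLinearMap.fst ℝ ℝ ℝ) (x, y) :=
    hmm.comp_hasFDerivAt (x, y) hfst
  have Hp1 : HasFDerivAt (fun z : ℝ × ℝ => p1 z.1) (dp1 • ContinuousLinearMap.fst ℝ ℝ ℝ) (x, y) :=
    h1.comp_hasFDerivAt (x, y) hfst
  have Hp0 : HasFDerivAt (fun z : ℝ × ℝ => p0 z.1) (dp0 • ContinuousLinearMap.fst ℝ ℝ ℝ) (x, y) :=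
    h0.comp_hasFDerivAt (x, y) hfst
  have Hqm : HasFDerivAt (fun z : ℝ × ℝ => qm z.1) (dqm • ContinuousLinearMap.fst ℝ ℝ ℝ) (x, y) :=
    kmm.comp_hasFDerivAt (x, y) hfst
  have Hq1 : HasFDerivAt (fun z : ℝ × ℝ => q1 z.1) (dq1 • ContinuousLinearMap.fst ℝ ℝ ℝ) (x, y) :=
    k1.comp_hasFDerivAt (x, y) hfst
  have Hq0 : HasFDerivAt (fun z : ℝ × ℝ => q0 z.1) (dq0 • ContinuousLinearMap.fst ℝ ℝ ℝ) (x, y) :=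
    k0.comp_hasFDerivAt (x, y) hfst
  have HP := ((Hpm.mul hym).add (Hp1.mul hsnd)).add Hp0
  have HQ := ((Hqm.mul hym).add (Hq1.mul hsnd)).add Hq0
  have H := HP.prodMk HQ
  refine H.congr_fderiv ?_
  apply ContinuousLinearMap.ext
  rintro ⟨v1, v2⟩
  rw [clm2_apply]
  simp [ContinuousLinearMap.smul_apply, smul_eq_mul]
  constructor <;> ring

/-- Theorem 2. For `m` odd, if `d₁ₘ(x) = 0` implies `qₘ(x) ≠ 0` and
`q₁(x) ≤ 0`, then the analytic non-singular map `F` is injective on `Σ`. -/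
theorem theorem2_iv_injective
    (I : Set ℝ) (hIopen : IsOpen I) (hIconn : IsPreconnected I)
    (m : ℕ) (hm : 1 < m) (hmodd : Odd m)
    (p₀ p₁ pm q₀ q₁ qm : ℝ → ℝ)
    (hp₀ : AnalyticOnNhd ℝ p₀ I) (hp₁ : AnalyticOnNhd ℝ p₁ I) (hpm : AnalyticOnNhd ℝ pm I)
    (hq₀ : AnalyticOnNhd ℝ q₀ I) (hq₁ : AnalyticOnNhd ℝ q₁ I) (hqm : AnalyticOnNhd ℝ qm I)
    (hpm0 : ∃ x ∈ I, pm x ≠ 0) (hqm0 : ∃ x ∈ I, qm x ≠ 0)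
    (F : ℝ × ℝ → ℝ × ℝ)
    (hFdef : ∀ x y : ℝ,
      F (x, y) = (pm x * y ^ m + p₁ x * y + p₀ x, qm x * y ^ m + q₁ x * y + q₀ x))
    (hns : ∀ z ∈ I ×ˢ (univ : Set ℝ), (fderiv ℝ F z).det ≠ 0)
    (hd : ∀ x ∈ I, p₁ x * qm x - q₁ x * pm x = 0 → qm x ≠ 0 ∧ q₁ x ≤ 0) :
    Set.InjOn F (I ×ˢ (univ : Set ℝ)) := by
  obtain ⟨n, rfl⟩ : ∃ n, m = n + 1 := ⟨m - 1, by omega⟩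
  have hn2 : 2 ≤ n := by rcases hmodd with ⟨k, hk⟩; omega
  have hIoc : I.OrdConnected := hIconn.ordConnected
  have hFeq : F = fun z : ℝ × ℝ => (pm z.1 * z.2 ^ (n+1) + p₁ z.1 * z.2 + p₀ z.1,
      qm z.1 * z.2 ^ (n+1) + q₁ z.1 * z.2 + q₀ z.1) := by
    funext z
    rw [show z = (z.1, z.2) from rfl, hFdef z.1 z.2]
  -- derivative facts
  have Hd : ∀ f : ℝ → ℝ, AnalyticOnNhd ℝ f I → ∀ x ∈ I, HasDerivAt f (deriv f x) x :=
    fun f hf x hx => (hf x hx).differentiableAt.hasDerivAt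
  -- the Jacobian determinant is nonzero
  have hDne : ∀ x ∈ I, ∀ y : ℝ,
      (deriv pm x * y ^ (n+1) + deriv p₁ x * y + deriv p₀ x) * (((n:ℝ)+1) * qm x * y ^ n + q₁ x)
      - (((n:ℝ)+1) * pm x * y ^ n + p₁ x) *
        (deriv qm x * y ^ (n+1) + deriv q₁ x * y + deriv q₀ x) ≠ 0 := by
    intro x hx y
    have HF := hasFDerivAt_polyF p₀ p₁ pm q₀ q₁ qm (n+1) x y
      (deriv p₀ x) (deriv p₁ x) (deriv pm x) (deriv q₀ x) (deriv q₁ x) (deriv qm x)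
      (Hd p₀ hp₀ x hx) (Hd p₁ hp₁ x hx) (Hd pm hpm x hx)
      (Hd q₀ hq₀ x hx) (Hd q₁ hq₁ x hx) (Hd qm hqm x hx)
    rw [← hFeq] at HF
    have hdet := hns (x, y) (mk_mem_prod hx (mem_univ y))
    rw [HF.fderiv, clm2_det] at hdet
    have hmn : n + 1 - 1 = n := by omega
    rw [hmn] at hdet
    intro h0
    apply hdet
    push_cast
    push_cast at h0
    linarith [h0]
  -- Step 1: the Wronskian of pm and qm vanishes on I
  have hW0 : ∀ x ∈ I, deriv pm x * qm x - pm x * deriv qm x = 0 := by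
    intro x hx
    by_contra hW
    have ha : ((n:ℝ)+1) * (deriv pm x * qm x - pm x * deriv qm x) ≠ 0 :=
      mul_ne_zero (by positivity) hW
    set a := ((n:ℝ)+1) * (deriv pm x * qm x - pm x * deriv qm x) with hadef
    set A := deriv pm x * q₁ x + ((n:ℝ)+1) * deriv p₁ x * qm x
      - ((n:ℝ)+1) * pm x * deriv q₁ x - p₁ x * deriv qm x with hAdef
    set B := ((n:ℝ)+1) * (deriv p₀ x * qm x - pm x * deriv q₀ x) with hBdef
    set Cq := deriv p₁ x * q₁ x - p₁ x * deriv q₁ x with hCdef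
    set E := deriv p₀ x * q₁ x - p₁ x * deriv q₀ x with hEdef
    set P : Polynomial ℝ := C a * X^(2*n+1) + C A * X^(n+1) + C B * X^n + C Cq * X + C E with hP
    have hdeg : P.natDegree = 2*n+1 := by
      rw [hP]
      compute_degree!
      · simp only [if_neg (by omega : ¬2*n = n), if_neg (by omega : ¬2*n+1 = n),
          if_neg (by omega : ¬n = 0)]
        simpa using ha
      all_goals omega
    obtain ⟨y, hy⟩ := exists_eval_zero_of_odd_natDegree P (hdeg ▸ ⟨n, by ring⟩)
    refine hDne x hx y ?_
    rw [← hy, hP]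
    simp only [eval_add, eval_mul, eval_pow, eval_C, eval_X]
    rw [hadef, hAdef, hBdef, hCdef, hEdef]
    ring
  -- Step 2: the coefficient of y^m vanishes on I
  have hA0 : ∀ x ∈ I, deriv pm x * q₁ x + ((n:ℝ)+1) * deriv p₁ x * qm x
      - ((n:ℝ)+1) * pm x * deriv q₁ x - p₁ x * deriv qm x = 0 := by
    intro x hx
    by_contra hA
    set A := deriv pm x * q₁ x + ((n:ℝ)+1) * deriv p₁ x * qm x
      - ((n:ℝ)+1) * pm x * deriv q₁ x - p₁ x * deriv qm x with hAdef
    set B := ((n:ℝ)+1) * (deriv p₀ x * qm x - pm x * deriv q₀ x) with hBdef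
    set Cq := deriv p₁ x * q₁ x - p₁ x * deriv q₁ x with hCdef
    set E := deriv p₀ x * q₁ x - p₁ x * deriv q₀ x with hEdef
    set P : Polynomial ℝ := C A * X^(n+1) + C B * X^n + C Cq * X + C E with hP
    have hdeg : P.natDegree = n+1 := by
      rw [hP]
      compute_degree!
      · simp only [if_neg (by omega : ¬n = 0)]
        simpa using hA
      all_goals omega
    obtain ⟨y, hy⟩ := exists_eval_zero_of_odd_natDegree P (hdeg ▸ hmodd)
    refine hDne x hx y ?_
    rw [← hy, hP]
    simp only [eval_add, eval_mul, eval_pow, eval_C, eval_X]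
    rw [hAdef, hBdef, hCdef, hEdef]
    have hW := hW0 x hx
    linear_combination (((n:ℝ)+1) * (y^n)^2 * y) * hW
  -- Step 3: qm never vanishes on I
  have hqm_ne : ∀ x ∈ I, qm x ≠ 0 := by
    intro x0 hx0 hq00
    obtain ⟨x1, hx1, hq1ne⟩ := hqm0
    have hfreq : ¬ (∃ᶠ z in nhdsWithin x0 {x0}ᶜ, qm z = 0) := by
      intro hf
      exact hq1ne (hqm.eqOn_zero_of_preconnected_of_frequently_eq_zero hIconn hx0 hf hx1)
    have hev : ∀ᶠ z in nhdsWithin x0 {x0}ᶜ, qm z ≠ 0 := Filter.not_frequently.mp hfreq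
    have hevI : ∀ᶠ z in nhdsWithin x0 {x0}ᶜ, z ∈ I :=
      (hIopen.eventually_mem hx0).filter_mono nhdsWithin_le_nhds
    have hev2 := hev.and hevI
    rw [eventually_nhdsWithin_iff, Metric.eventually_nhds_iff] at hev2
    obtain ⟨ε, hε, hball⟩ := hev2
    have hJ : ∀ z ∈ Ioo x0 (x0 + ε), qm z ≠ 0 ∧ z ∈ I := by
      intro z hz
      refine hball ?_ ?_
      · rw [Real.dist_eq, abs_lt]; constructor <;> [linarith [hz.1, hz.2]; linarith [hz.1, hz.2]]
      · exact fun h => absurd h (by simp; exact ne_of_gt hz.1)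
    -- pm/qm is constant on the interval to the right of x0
    have hder : ∀ z ∈ Ioo x0 (x0 + ε), HasDerivAt (fun t => pm t / qm t) 0 z := by
      intro z hz
      obtain ⟨hqz, hzI⟩ := hJ z hz
      have h := (Hd pm hpm z hzI).div (Hd qm hqm z hzI) hqz
      have : (deriv pm z * qm z - pm z * deriv qm z) / qm z ^ 2 = 0 := by
        rw [hW0 z hzI, zero_div]
      rwa [this] at h
    have hmid : x0 + ε/2 ∈ Ioo x0 (x0 + ε) := by constructor <;> linarith
    set c0 := pm (x0 + ε/2) / qm (x0 + ε/2) with hc0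
    have hconst : ∀ z ∈ Ioo x0 (x0 + ε), pm z = c0 * qm z := by
      intro z hz
      have h := eq_of_hasDerivAt_zero Set.ordConnected_Ioo hder z hz _ hmid
      rw [hc0, ← h, div_mul_cancel₀ _ (hJ z hz).1]
    -- take limits from the right
    have hmem : Ioo x0 (x0 + ε) ∈ nhdsWithin x0 (Ioi x0) :=
      Ioo_mem_nhdsGT_of_mem ⟨le_refl x0, by linarith⟩
    have hT1 : Filter.Tendsto pm (nhdsWithin x0 (Ioi x0)) (nhds (pm x0)) :=
      ((hpm x0 hx0).continuousAt.continuousWithinAt)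
    have hT2 : Filter.Tendsto (fun z => c0 * qm z) (nhdsWithin x0 (Ioi x0)) (nhds (c0 * qm x0)) :=
      ((hqm x0 hx0).continuousAt.continuousWithinAt).const_mul c0
    have hT1' : Filter.Tendsto pm (nhdsWithin x0 (Ioi x0)) (nhds (c0 * qm x0)) :=
      hT2.congr' (Filter.eventuallyEq_of_mem hmem (fun z hz => (hconst z hz).symm))
    have hpm0' : pm x0 = c0 * qm x0 := tendsto_nhds_unique hT1 hT1'
    have hpmx0 : pm x0 = 0 := by rw [hpm0', hq00, mul_zero]
    exact (hd x0 hx0 (by rw [hq00, hpmx0]; ring)).1 hq00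
  -- Step 4: pm = c * qm on I for a constant c
  obtain ⟨xI, hxI, -⟩ := hqm0
  have hφ : ∀ x ∈ I, HasDerivAt (fun t => pm t / qm t) 0 x := by
    intro x hx
    have h := (Hd pm hpm x hx).div (Hd qm hqm x hx) (hqm_ne x hx)
    have : (deriv pm x * qm x - pm x * deriv qm x) / qm x ^ 2 = 0 := by
      rw [hW0 x hx, zero_div]
    rwa [this] at h
  set c := pm xI / qm xI with hcdef
  have hpc : ∀ x ∈ I, pm x = c * qm x := by
    intro x hx
    have := eq_of_hasDerivAt_zero hIoc hφ x hx xI hxI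
    rw [hcdef, ← this, div_mul_cancel₀ _ (hqm_ne x hx)]
  have hpc' : ∀ x ∈ I, deriv pm x = c * deriv qm x := by
    intro x hx
    have hev : pm =ᶠ[nhds x] (fun z => c * qm z) :=
      Filter.eventuallyEq_of_mem (hIopen.mem_nhds hx) (fun z hz => hpc z hz)
    have h2 : HasDerivAt pm (c * deriv qm x) x :=
      ((Hd qm hqm x hx).const_mul c).congr_of_eventuallyEq hev
    exact (Hd pm hpm x hx).unique h2
  -- r and u
  have hrD : ∀ x ∈ I, HasDerivAt (fun t => p₁ t - c * q₁ t) (deriv p₁ x - c * deriv q₁ x) x :=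
    fun x hx => (Hd p₁ hp₁ x hx).sub ((Hd q₁ hq₁ x hx).const_mul c)
  have huD : ∀ x ∈ I, HasDerivAt (fun t => p₀ t - c * q₀ t) (deriv p₀ x - c * deriv q₀ x) x :=
    fun x hx => (Hd p₀ hp₀ x hx).sub ((Hd q₀ hq₀ x hx).const_mul c)
  have hA0' : ∀ x ∈ I, ((n:ℝ)+1) * (deriv p₁ x - c * deriv q₁ x) * qm x
      - (p₁ x - c * q₁ x) * deriv qm x = 0 := by
    intro x hx
    have h := hA0 x hx
    rw [hpc x hx, hpc' x hx] at h
    linear_combination h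
  -- r^(n+1) = κ * qm for a constant κ
  have hkD : ∀ x ∈ I, HasDerivAt (fun t => (p₁ t - c * q₁ t)^(n+1) / qm t) 0 x := by
    intro x hx
    have hnum : HasDerivAt (fun t => (p₁ t - c * q₁ t)^(n+1))
        ((((n:ℕ)+1 : ℕ):ℝ) * (p₁ x - c * q₁ x)^(n+1-1) * (deriv p₁ x - c * deriv q₁ x)) x := by
      exact (hrD x hx).pow (n+1)
    have h := hnum.div (Hd qm hqm x hx) (hqm_ne x hx)
    have hval : ((((n:ℕ)+1 : ℕ):ℝ) * (p₁ x - c * q₁ x)^(n+1-1) * (deriv p₁ x - c * deriv q₁ x)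
        * qm x - (p₁ x - c * q₁ x)^(n+1) * deriv qm x) / qm x ^ 2 = 0 := by
      have h2 : (((n:ℕ)+1 : ℕ):ℝ) * (p₁ x - c * q₁ x)^(n+1-1) * (deriv p₁ x - c * deriv q₁ x)
          * qm x - (p₁ x - c * q₁ x)^(n+1) * deriv qm x = 0 := by
        simp only [Nat.add_sub_cancel]
        push_cast
        linear_combination ((p₁ x - c * q₁ x)^n) * hA0' x hx
      rw [h2, zero_div]
    rwa [hval] at h
  set κ := (p₁ xI - c * q₁ xI)^(n+1) / qm xI with hκdef
  have hκ : ∀ x ∈ I, (p₁ x - c * q₁ x)^(n+1) = κ * qm x := by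
    intro x hx
    have := eq_of_hasDerivAt_zero hIoc hkD x hx xI hxI
    rw [hκdef, ← this, div_mul_cancel₀ _ (hqm_ne x hx)]
  -- determinant identity in terms of r and u
  have hDr : ∀ x ∈ I, ∀ y : ℝ,
      ((deriv p₁ x - c * deriv q₁ x) * y + (deriv p₀ x - c * deriv q₀ x)) *
        (((n:ℝ)+1) * qm x * y ^ n + q₁ x)
      - (p₁ x - c * q₁ x) * (deriv qm x * y ^ (n+1) + deriv q₁ x * y + deriv q₀ x) ≠ 0 := by
    intro x hx y h0
    refine hDne x hx y ?_
    rw [hpc x hx, hpc' x hx]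
    linear_combination h0
  -- final injectivity argument
  rintro ⟨x1, y1⟩ hz1 ⟨x2, y2⟩ hz2 hFz
  have hx1 : x1 ∈ I := hz1.1
  have hx2 : x2 ∈ I := hz2.1
  rw [hFdef x1 y1, hFdef x2 y2, Prod.ext_iff] at hFz
  obtain ⟨hP, hQ⟩ := hFz
  -- the "linear" relation
  have hPQ : (p₁ x1 - c * q₁ x1) * y1 + (p₀ x1 - c * q₀ x1)
      = (p₁ x2 - c * q₁ x2) * y2 + (p₀ x2 - c * q₀ x2) := by
    have hP' := hP
    rw [hpc x1 hx1, hpc x2 hx2] at hP'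
    linear_combination hP' - c * hQ
  by_cases hκ0 : κ = 0
  · -- Case A : r ≡ 0 on I
    have hr0 : ∀ x ∈ I, p₁ x - c * q₁ x = 0 := by
      intro x hx
      have := hκ x hx
      rw [hκ0, zero_mul] at this
      exact pow_eq_zero_iff (Nat.succ_ne_zero n) |>.mp this
    have hr0' : ∀ x ∈ I, deriv p₁ x - c * deriv q₁ x = 0 := by
      intro x hx
      have hev : (fun t => p₁ t - c * q₁ t) =ᶠ[nhds x] (fun _ => (0:ℝ)) :=
        Filter.eventuallyEq_of_mem (hIopen.mem_nhds hx) (fun z hz => hr0 z hz)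
      have h2 : HasDerivAt (fun t => p₁ t - c * q₁ t) 0 x :=
        (hasDerivAt_const x (0:ℝ)).congr_of_eventuallyEq hev
      exact (hrD x hx).unique h2
    have hu' : ∀ x ∈ I, ∀ y : ℝ,
        (deriv p₀ x - c * deriv q₀ x) * (((n:ℝ)+1) * qm x * y ^ n + q₁ x) ≠ 0 := by
      intro x hx y h0
      refine hDr x hx y ?_
      rw [hr0 x hx, hr0' x hx]
      linear_combination h0
    have hune : ∀ x ∈ I, deriv p₀ x - c * deriv q₀ x ≠ 0 :=
      fun x hx => left_ne_zero_of_mul (hu' x hx 0)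
    have hQy : ∀ x ∈ I, ∀ y : ℝ, ((n:ℝ)+1) * qm x * y ^ n + q₁ x ≠ 0 :=
      fun x hx y => right_ne_zero_of_mul (hu' x hx y)
    -- x1 = x2
    have hxeq : x1 = x2 := by
      refine injOn_of_hasDerivAt_ne_zero hIoc huD hune hx1 hx2 ?_
      have h1 := hr0 x1 hx1
      have h2 := hr0 x2 hx2
      linear_combination hPQ - y1 * h1 + y2 * h2
    subst hxeq
    -- y1 = y2
    have hgd : ∀ y : ℝ, HasDerivAt (fun t : ℝ => qm x1 * t ^ (n+1) + q₁ x1 * t + q₀ x1)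
        (((n:ℝ)+1) * qm x1 * y ^ n + q₁ x1) y := by
      intro y
      have h1 := hasDerivAt_pow (n+1) y
      simp only [Nat.add_sub_cancel, Nat.cast_add, Nat.cast_one] at h1
      have h2 := ((h1.const_mul (qm x1)).add ((hasDerivAt_id y).const_mul (q₁ x1))).add_const
        (q₀ x1)
      have h3 : qm x1 * (((n:ℝ)+1) * y ^ n) + q₁ x1 * 1 = ((n:ℝ)+1) * qm x1 * y ^ n + q₁ x1 := by
        ring
      rwa [h3] at h2
    have : y1 = y2 := by
      refine injOn_of_hasDerivAt_ne_zero Set.ordConnected_univ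
        (fun y _ => hgd y) (fun y _ => hQy x1 hx1 y) (mem_univ y1) (mem_univ y2) ?_
      simpa using hQ
    simp [this]
  · -- Case B : r never vanishes on I
    have hrne : ∀ x ∈ I, p₁ x - c * q₁ x ≠ 0 := by
      intro x hx h0
      have := hκ x hx
      rw [h0, zero_pow (Nat.succ_ne_zero n)] at this
      exact hκ0 (by
        have := this.symm
        rcases mul_eq_zero.mp (by linarith [this] : κ * qm x = 0) with h | h
        · exact h
        · exact absurd h (hqm_ne x hx))
    obtain ⟨η, hη1, hη2⟩ : ∃ η, (p₁ x1 - c * q₁ x1) * y1 + (p₀ x1 - c * q₀ x1) = η ∧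
        (p₁ x2 - c * q₁ x2) * y2 + (p₀ x2 - c * q₀ x2) = η := ⟨_, rfl, hPQ.symm⟩
    set v := fun x => (η - (p₀ x - c * q₀ x)) / (p₁ x - c * q₁ x) with hvdef
    have hv1 : v x1 = y1 := by
      rw [hvdef]
      field_simp [hrne x1 hx1]
      linear_combination -hη1
    have hv2 : v x2 = y2 := by
      rw [hvdef]
      field_simp [hrne x2 hx2]
      linear_combination -hη2
    -- the function H
    set H := fun x => qm x * (v x) ^ (n+1) + q₁ x * v x + q₀ x with hHdef
    have hH12 : H x1 = H x2 := by
      rw [hHdef]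
      simp only [hv1, hv2]
      exact hQ
    -- derivative of v
    have hvD : ∀ x ∈ I, HasDerivAt v
        (((0 - (deriv p₀ x - c * deriv q₀ x)) * (p₁ x - c * q₁ x)
          - (η - (p₀ x - c * q₀ x)) * (deriv p₁ x - c * deriv q₁ x)) / (p₁ x - c * q₁ x) ^ 2)
        x := by
      intro x hx
      exact ((hasDerivAt_const x η).sub (huD x hx)).div (hrD x hx) (hrne x hx)
    -- derivative of H
    have hHD : ∀ x ∈ I, HasDerivAt H
        (deriv qm x * (v x) ^ (n+1) + qm x * (((n:ℝ)+1) * (v x) ^ n *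
            (((0 - (deriv p₀ x - c * deriv q₀ x)) * (p₁ x - c * q₁ x)
          - (η - (p₀ x - c * q₀ x)) * (deriv p₁ x - c * deriv q₁ x)) / (p₁ x - c * q₁ x) ^ 2))
          + (deriv q₁ x * v x + q₁ x *
            (((0 - (deriv p₀ x - c * deriv q₀ x)) * (p₁ x - c * q₁ x)
          - (η - (p₀ x - c * q₀ x)) * (deriv p₁ x - c * deriv q₁ x)) / (p₁ x - c * q₁ x) ^ 2))
          + deriv q₀ x) x := by
      intro x hx
      have hpow : HasDerivAt (fun t => (v t) ^ (n+1))
          (((n:ℝ)+1) * (v x) ^ n *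
            (((0 - (deriv p₀ x - c * deriv q₀ x)) * (p₁ x - c * q₁ x)
          - (η - (p₀ x - c * q₀ x)) * (deriv p₁ x - c * deriv q₁ x)) / (p₁ x - c * q₁ x) ^ 2))
          x := by
        have h := (hvD x hx).pow (n+1)
        simp only [Nat.add_sub_cancel, Nat.cast_add, Nat.cast_one] at h
        exact h
      exact (((Hd qm hqm x hx).mul hpow).add (((Hd q₁ hq₁ x hx).mul (hvD x hx)))).add
        (Hd q₀ hq₀ x hx)
    -- H' is nonvanishing
    have hHne : ∀ x ∈ I, (deriv qm x * (v x) ^ (n+1) + qm x * (((n:ℝ)+1) * (v x) ^ n *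
            (((0 - (deriv p₀ x - c * deriv q₀ x)) * (p₁ x - c * q₁ x)
          - (η - (p₀ x - c * q₀ x)) * (deriv p₁ x - c * deriv q₁ x)) / (p₁ x - c * q₁ x) ^ 2))
          + (deriv q₁ x * v x + q₁ x *
            (((0 - (deriv p₀ x - c * deriv q₀ x)) * (p₁ x - c * q₁ x)
          - (η - (p₀ x - c * q₀ x)) * (deriv p₁ x - c * deriv q₁ x)) / (p₁ x - c * q₁ x) ^ 2))
          + deriv q₀ x) ≠ 0 := by
      intro x hx h0
      have hr := hrne x hx
      have hvr : v x * (p₁ x - c * q₁ x) = η - (p₀ x - c * q₀ x) := by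
        rw [hvdef]; field_simp
      have key : ((deriv p₁ x - c * deriv q₁ x) * (v x) + (deriv p₀ x - c * deriv q₀ x)) *
        (((n:ℝ)+1) * qm x * (v x) ^ n + q₁ x)
      - (p₁ x - c * q₁ x) * (deriv qm x * (v x) ^ (n+1) + deriv q₁ x * (v x) + deriv q₀ x)
          = 0 := by
        have h1 : ((0 - (deriv p₀ x - c * deriv q₀ x)) * (p₁ x - c * q₁ x)
          - (η - (p₀ x - c * q₀ x)) * (deriv p₁ x - c * deriv q₁ x)) / (p₁ x - c * q₁ x) ^ 2
            * (p₁ x - c * q₁ x)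
            = (0 - (deriv p₀ x - c * deriv q₀ x)) - v x * (deriv p₁ x - c * deriv q₁ x) := by
          rw [← hvr]
          field_simp
        have h2 : (deriv qm x * (v x) ^ (n+1) + qm x * (((n:ℝ)+1) * (v x) ^ n *
            (((0 - (deriv p₀ x - c * deriv q₀ x)) * (p₁ x - c * q₁ x)
          - (η - (p₀ x - c * q₀ x)) * (deriv p₁ x - c * deriv q₁ x)) / (p₁ x - c * q₁ x) ^ 2))
          + (deriv q₁ x * v x + q₁ x *
            (((0 - (deriv p₀ x - c * deriv q₀ x)) * (p₁ x - c * q₁ x)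
          - (η - (p₀ x - c * q₀ x)) * (deriv p₁ x - c * deriv q₁ x)) / (p₁ x - c * q₁ x) ^ 2))
          + deriv q₀ x) * (p₁ x - c * q₁ x) = 0 := by rw [h0, zero_mul]
        linear_combination (-1 : ℝ) * h2 + (qm x * (((n:ℝ)+1) * (v x) ^ n) + q₁ x) * h1
      exact hDr x hx (v x) key
    -- x1 = x2
    have hxeq : x1 = x2 :=
      injOn_of_hasDerivAt_ne_zero hIoc hHD hHne hx1 hx2 hH12
    subst hxeq
    -- y1 = y2
    have hy : y1 = y2 := by
      have h := hPQ
      have hr := hrne x1 hx1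
      have : (p₁ x1 - c * q₁ x1) * (y1 - y2) = 0 := by linear_combination h
      rcases mul_eq_zero.mp this with h' | h'
      · exact absurd h' hr
      · linarith
    simp [hy]
end

section
/- Let F(x,y) = (p₂(x) y² + p₁(x) y + p₀(x), q₂(x) y² + q₁(x) y + q₀(x)) be a real analytic non-singular map on the strip Σ = I × ℝ. If either p₂(x) ≠ 0 for all x ∈ I or q₂(x) ≠ 0 for all x ∈ I, then F is injective on Σ. -/
open Set Polynomial Filter

/-- Determinant of a continuous linear map on `ℝ × ℝ` in terms of its matrix entries. -/
lemma clm_det_eq (L : ℝ × ℝ →L[ℝ] ℝ × ℝ) :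
    L.det = (L (1,0)).1 * (L (0,1)).2 - (L (0,1)).1 * (L (1,0)).2 := by
  rw [ContinuousLinearMap.det, ← LinearMap.det_toMatrix (Module.Basis.finTwoProd ℝ), Matrix.det_fin_two]
  simp [LinearMap.toMatrix_apply, Module.Basis.coe_finTwoProd_repr, Module.Basis.finTwoProd_zero,
    Module.Basis.finTwoProd_one]

/-- Fréchet derivative of a `y`-quadratic scalar function. -/
lemma quad_hasFDerivAt (p₀ p₁ p₂ : ℝ → ℝ) (x y : ℝ)
    (h0 : DifferentiableAt ℝ p₀ x) (h1 : DifferentiableAt ℝ p₁ x)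
    (h2 : DifferentiableAt ℝ p₂ x) :
    ∃ D : ℝ × ℝ →L[ℝ] ℝ, HasFDerivAt (fun z : ℝ × ℝ => p₂ z.1 * z.2 ^ 2 + p₁ z.1 * z.2 + p₀ z.1)
      D (x, y) ∧ D (1,0) = deriv p₂ x * y ^ 2 + deriv p₁ x * y + deriv p₀ x
      ∧ D (0,1) = 2 * p₂ x * y + p₁ x := by
  have hfun : (fun z : ℝ × ℝ => p₂ z.1 * z.2 ^ 2 + p₁ z.1 * z.2 + p₀ z.1)
      = (fun z : ℝ × ℝ => p₂ z.1 * (z.2 * z.2) + p₁ z.1 * z.2 + p₀ z.1) := by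
    funext z; ring
  rw [hfun]
  have hf : HasFDerivAt (Prod.fst : ℝ × ℝ → ℝ) (ContinuousLinearMap.fst ℝ ℝ ℝ) (x, y) :=
    hasFDerivAt_fst
  have hs : HasFDerivAt (Prod.snd : ℝ × ℝ → ℝ) (ContinuousLinearMap.snd ℝ ℝ ℝ) (x, y) :=
    hasFDerivAt_snd
  have h2' := (h2.hasDerivAt.hasFDerivAt.comp (x, y) hf)
  have h1' := (h1.hasDerivAt.hasFDerivAt.comp (x, y) hf)
  have h0' := (h0.hasDerivAt.hasFDerivAt.comp (x, y) hf)
  have hD := ((h2'.mul (hs.mul hs)).add (h1'.mul hs)).add h0'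
  refine ⟨_, hD, ?_, ?_⟩ <;>
    simp [ContinuousLinearMap.add_apply, ContinuousLinearMap.smul_apply,
      ContinuousLinearMap.comp_apply, ContinuousLinearMap.smulRight_apply] <;> ring

/-- The Jacobian determinant of a `y`-quadratic map. -/
lemma quad_det (p₀ p₁ p₂ q₀ q₁ q₂ : ℝ → ℝ) (F : ℝ × ℝ → ℝ × ℝ)
    (hFdef : ∀ x y : ℝ,
      F (x, y) = (p₂ x * y ^ 2 + p₁ x * y + p₀ x, q₂ x * y ^ 2 + q₁ x * y + q₀ x))
    (x y : ℝ)
    (hp0 : DifferentiableAt ℝ p₀ x) (hp1 : DifferentiableAt ℝ p₁ x)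
    (hp2 : DifferentiableAt ℝ p₂ x)
    (hq0 : DifferentiableAt ℝ q₀ x) (hq1 : DifferentiableAt ℝ q₁ x)
    (hq2 : DifferentiableAt ℝ q₂ x) :
    (fderiv ℝ F (x, y)).det =
      (deriv p₂ x * y ^ 2 + deriv p₁ x * y + deriv p₀ x) * (2 * q₂ x * y + q₁ x)
      - (2 * p₂ x * y + p₁ x) * (deriv q₂ x * y ^ 2 + deriv q₁ x * y + deriv q₀ x) := by
  have hF : F = fun z : ℝ × ℝ =>
      ((fun w : ℝ × ℝ => p₂ w.1 * w.2 ^ 2 + p₁ w.1 * w.2 + p₀ w.1) z,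
       (fun w : ℝ × ℝ => q₂ w.1 * w.2 ^ 2 + q₁ w.1 * w.2 + q₀ w.1) z) := by
    funext z; obtain ⟨a, b⟩ := z; exact hFdef a b
  obtain ⟨DP, hDP, hDP1, hDP2⟩ := quad_hasFDerivAt p₀ p₁ p₂ x y hp0 hp1 hp2
  obtain ⟨DQ, hDQ, hDQ1, hDQ2⟩ := quad_hasFDerivAt q₀ q₁ q₂ x y hq0 hq1 hq2
  have hFD : HasFDerivAt F (DP.prod DQ) (x, y) := by
    rw [hF]; exact hDP.prodMk hDQ
  rw [hFD.fderiv, clm_det_eq]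
  simp only [ContinuousLinearMap.prod_apply, hDP1, hDP2, hDQ1, hDQ2]

lemma cubic_exists_root' (c₃ c₂ c₁ c₀ : ℝ) (h : 0 < c₃) :
    ∃ y : ℝ, c₃ * y ^ 3 + c₂ * y ^ 2 + c₁ * y + c₀ = 0 := by
  set P : ℝ[X] := C c₃ * X ^ 3 + C c₂ * X ^ 2 + C c₁ * X + C c₀ with hP
  have hdeg : P.degree = 3 := degree_cubic h.ne'
  have hlead : P.leadingCoeff = c₃ := leadingCoeff_cubic h.ne'
  have htop : Tendsto (fun x => P.eval x) atTop atTop :=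
    P.tendsto_atTop_of_leadingCoeff_nonneg (by rw [hdeg]; norm_num) (by rw [hlead]; exact h.le)
  set Q : ℝ[X] := C (-c₃) * X ^ 3 + C c₂ * X ^ 2 + C (-c₁) * X + C c₀ with hQ
  have hQeval : ∀ x : ℝ, Q.eval x = P.eval (-x) := by intro x; simp [hP, hQ]; ring
  have hbot : Tendsto (fun x => Q.eval x) atTop atBot :=
    Q.tendsto_atBot_of_leadingCoeff_nonpos
      (by rw [degree_cubic (neg_ne_zero.2 h.ne')]; norm_num)
      (by rw [leadingCoeff_cubic (neg_ne_zero.2 h.ne')]; linarith)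
  obtain ⟨a, ha⟩ := (htop.eventually_ge_atTop 1).exists
  obtain ⟨b, hb⟩ := (hbot.eventually_le_atBot (-1)).exists
  have hcont : Continuous fun x : ℝ => P.eval x := P.continuous_aeval
  have hmem : (0 : ℝ) ∈ Set.range fun x : ℝ => P.eval x := by
    apply intermediate_value_univ (-b) a hcont
    rw [hQeval b] at hb
    exact ⟨by linarith, by linarith⟩
  obtain ⟨y, hy⟩ := hmem
  exact ⟨y, by simp [hP] at hy; linarith⟩

lemma cubic_coeff_zero (c₃ c₂ c₁ c₀ : ℝ)
    (h : ∀ y : ℝ, c₃ * y ^ 3 + c₂ * y ^ 2 + c₁ * y + c₀ ≠ 0) : c₃ = 0 := by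
  by_contra hne
  rcases lt_or_gt_of_ne hne with hlt | hgt
  · obtain ⟨y, hy⟩ := cubic_exists_root' (-c₃) (-c₂) (-c₁) (-c₀) (by linarith)
    exact h y (by linarith)
  · obtain ⟨y, hy⟩ := cubic_exists_root' c₃ c₂ c₁ c₀ hgt
    exact h y hy

/-- Key lemma: injectivity when `p₂` never vanishes, with the Jacobian hypothesis in
explicit scalar form. -/
lemma key_injective (I : Set ℝ) (hIopen : IsOpen I) (hIconn : IsPreconnected I)
    (p₀ p₁ p₂ q₀ q₁ q₂ : ℝ → ℝ)
    (hp₀ : ∀ x ∈ I, DifferentiableAt ℝ p₀ x) (hp₁ : ∀ x ∈ I, DifferentiableAt ℝ p₁ x)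
    (hp₂ : ∀ x ∈ I, DifferentiableAt ℝ p₂ x)
    (hq₀ : ∀ x ∈ I, DifferentiableAt ℝ q₀ x) (hq₁ : ∀ x ∈ I, DifferentiableAt ℝ q₁ x)
    (hq₂ : ∀ x ∈ I, DifferentiableAt ℝ q₂ x)
    (F : ℝ × ℝ → ℝ × ℝ)
    (hFdef : ∀ x y : ℝ,
      F (x, y) = (p₂ x * y ^ 2 + p₁ x * y + p₀ x, q₂ x * y ^ 2 + q₁ x * y + q₀ x))
    (hJ : ∀ x ∈ I, ∀ y : ℝ,
      (deriv p₂ x * y ^ 2 + deriv p₁ x * y + deriv p₀ x) * (2 * q₂ x * y + q₁ x)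
      - (2 * p₂ x * y + p₁ x) * (deriv q₂ x * y ^ 2 + deriv q₁ x * y + deriv q₀ x) ≠ 0)
    (hp2 : ∀ x ∈ I, p₂ x ≠ 0) :
    Set.InjOn F (I ×ˢ (univ : Set ℝ)) := by
  have hconv : Convex ℝ I := hIconn.ordConnected.convex
  -- Step 1 : the Wronskian-type cubic leading coefficient vanishes on `I`
  have hW : ∀ x ∈ I, deriv p₂ x * q₂ x - p₂ x * deriv q₂ x = 0 := by
    intro x hx
    have hcube := cubic_coeff_zero
      (2 * deriv p₂ x * q₂ x - 2 * p₂ x * deriv q₂ x)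
      (deriv p₂ x * q₁ x + 2 * deriv p₁ x * q₂ x - 2 * p₂ x * deriv q₁ x - p₁ x * deriv q₂ x)
      (deriv p₁ x * q₁ x + 2 * deriv p₀ x * q₂ x - 2 * p₂ x * deriv q₀ x - p₁ x * deriv q₁ x)
      (deriv p₀ x * q₁ x - p₁ x * deriv q₀ x)
      (by
        intro y h0
        apply hJ x hx y
        linear_combination h0)
    linarith
  -- Step 2 : `q₂ / p₂` is constant on `I`
  set φ : ℝ → ℝ := fun x => q₂ x / p₂ x with hφ
  have hφdiff : DifferentiableOn ℝ φ I := fun x hx =>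
    (((hq₂ x hx).div (hp₂ x hx) (hp2 x hx))).differentiableWithinAt
  have hφderiv : ∀ x ∈ I, HasDerivAt φ 0 x := by
    intro x hx
    have h := ((hq₂ x hx).hasDerivAt).div ((hp₂ x hx).hasDerivAt) (hp2 x hx)
    have hval : (deriv q₂ x * p₂ x - q₂ x * deriv p₂ x) / p₂ x ^ 2 = 0 := by
      rw [_root_.div_eq_zero_iff]; left
      have := hW x hx; nlinarith [this]
    rwa [hval] at h
  have hφconst : ∀ x₁ ∈ I, ∀ x₂ ∈ I, φ x₁ = φ x₂ := by
    intro x₁ hx₁ x₂ hx₂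
    refine hconv.is_const_of_fderivWithin_eq_zero hφdiff ?_ hx₁ hx₂
    intro x hx
    rw [fderivWithin_of_isOpen hIopen hx, (hφderiv x hx).hasFDerivAt.fderiv]
    exact ContinuousLinearMap.ext fun v => by simp
  -- now prove injectivity
  rintro ⟨x₁, y₁⟩ ⟨hx₁, -⟩ ⟨x₂, y₂⟩ ⟨hx₂, -⟩ hFeq
  set lam : ℝ := φ x₁ with hlam
  have hq2lam : ∀ x ∈ I, q₂ x = lam * p₂ x := by
    intro x hx
    have h : φ x₁ = q₂ x / p₂ x := hφconst x₁ hx₁ x hx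
    rw [hlam, h, div_mul_cancel₀ _ (hp2 x hx)]
  have hdq2lam : ∀ x ∈ I, deriv q₂ x = lam * deriv p₂ x := by
    intro x hx
    have hev : q₂ =ᶠ[nhds x] fun t => lam * p₂ t := by
      filter_upwards [hIopen.mem_nhds hx] with t ht using hq2lam t ht
    rw [hev.deriv_eq, deriv_const_mul _ (hp₂ x hx)]
  set r₁ : ℝ → ℝ := fun x => q₁ x - lam * p₁ x with hr₁def
  set r₀ : ℝ → ℝ := fun x => q₀ x - lam * p₀ x with hr₀def
  -- Step 3 : `r₁` never vanishes on `I`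
  have hr1ne : ∀ x ∈ I, r₁ x ≠ 0 := by
    intro x hx h0
    set ys : ℝ := -p₁ x / (2 * p₂ x) with hys
    have hp2x := hp2 x hx
    have hb : 2 * p₂ x * ys + p₁ x = 0 := by
      rw [hys]; field_simp; ring
    have hd : 2 * q₂ x * ys + q₁ x = 0 := by
      have h1 := hq2lam x hx
      have h2 : q₁ x = lam * p₁ x := by
        have : r₁ x = q₁ x - lam * p₁ x := rfl
        rw [this] at h0; linarith
      rw [h1, h2]
      linear_combination lam * hb
    exact hJ x hx ys (by rw [hb, hd]; ring)
  -- the common second coordinate value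
  have hFeq1 : p₂ x₁ * y₁ ^ 2 + p₁ x₁ * y₁ + p₀ x₁ = p₂ x₂ * y₂ ^ 2 + p₁ x₂ * y₂ + p₀ x₂ := by
    have h := hFeq
    rw [hFdef x₁ y₁, hFdef x₂ y₂] at h
    exact congrArg Prod.fst h
  have hFeq2 : q₂ x₁ * y₁ ^ 2 + q₁ x₁ * y₁ + q₀ x₁ = q₂ x₂ * y₂ ^ 2 + q₁ x₂ * y₂ + q₀ x₂ := by
    have h := hFeq
    rw [hFdef x₁ y₁, hFdef x₂ y₂] at h
    exact congrArg Prod.snd h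
  set v : ℝ := r₁ x₁ * y₁ + r₀ x₁ with hv
  have hv2 : v = r₁ x₂ * y₂ + r₀ x₂ := by
    have h1 := hq2lam x₁ hx₁
    have h2 := hq2lam x₂ hx₂
    simp only [hv, hr₁def, hr₀def]
    linear_combination hFeq2 - lam * hFeq1 - y₁ ^ 2 * h1 + y₂ ^ 2 * h2
  set Y : ℝ → ℝ := fun x => (v - r₀ x) / r₁ x with hY
  set g : ℝ → ℝ := fun x => p₂ x * Y x ^ 2 + p₁ x * Y x + p₀ x with hg
  have hY1 : Y x₁ = y₁ := by
    simp only [hY, hv]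
    field_simp [hr1ne x₁ hx₁]; ring
  have hY2 : Y x₂ = y₂ := by
    simp only [hY, hv2]
    field_simp [hr1ne x₂ hx₂]; ring
  -- derivative of g on I
  have hgderiv : ∀ x ∈ I, HasDerivAt g
      (((deriv p₂ x * Y x ^ 2 + deriv p₁ x * Y x + deriv p₀ x) * r₁ x
        - (2 * p₂ x * Y x + p₁ x)
          * ((deriv q₀ x - lam * deriv p₀ x) + Y x * (deriv q₁ x - lam * deriv p₁ x))) / r₁ x) x := by
    intro x hx
    have hr0' : HasDerivAt r₀ (deriv q₀ x - lam * deriv p₀ x) x :=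
      ((hq₀ x hx).hasDerivAt).sub (((hp₀ x hx).hasDerivAt).const_mul lam)
    have hr1' : HasDerivAt r₁ (deriv q₁ x - lam * deriv p₁ x) x :=
      ((hq₁ x hx).hasDerivAt).sub (((hp₁ x hx).hasDerivAt).const_mul lam)
    have hYd : HasDerivAt Y
        (-((deriv q₀ x - lam * deriv p₀ x) + Y x * (deriv q₁ x - lam * deriv p₁ x)) / r₁ x) x := by
      have h := ((hasDerivAt_const x v).sub hr0').div hr1' (hr1ne x hx)
      convert h using 1
      · rfl
      · rfl
      · rfl
      simp only [Pi.sub_apply]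
      have hYx : Y x * r₁ x = v - r₀ x := by
        rw [hY]; field_simp [hr1ne x hx]
      rw [← hYx]
      field_simp [hr1ne x hx]
      ring
    have hgd := (((hp₂ x hx).hasDerivAt.mul (hYd.pow 2)).add
      ((hp₁ x hx).hasDerivAt.mul hYd)).add (hp₀ x hx).hasDerivAt
    convert hgd using 1
    · rfl
    · rfl
    · rfl
    simp only [Pi.pow_apply]
    field_simp [hr1ne x hx]
    ring
  have hgderiv_ne : ∀ x ∈ I, deriv g x ≠ 0 := by
    intro x hx
    rw [(hgderiv x hx).deriv]
    intro h0
    apply hJ x hx (Y x)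
    have hq2x := hq2lam x hx
    have hdq2x := hdq2lam x hx
    have hq1x : q₁ x = r₁ x + lam * p₁ x := by simp [hr₁def]
    rw [_root_.div_eq_zero_iff] at h0
    rcases h0 with h0 | h0
    · linear_combination h0 + (2 * (deriv p₂ x * Y x ^ 2 + deriv p₁ x * Y x + deriv p₀ x) * Y x) * hq2x
        + (deriv p₂ x * Y x ^ 2 + deriv p₁ x * Y x + deriv p₀ x) * hq1x
        - ((2 * p₂ x * Y x + p₁ x) * Y x ^ 2) * hdq2x
    · exact absurd h0 (hr1ne x hx)
  -- Darboux: deriv g has constant sign on I, hence g is injective on I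
  have hgdiff : ∀ x ∈ I, DifferentiableAt ℝ g x := fun x hx =>
    (hgderiv x hx).differentiableAt
  have hgcont : ContinuousOn g I := fun x hx => ((hgdiff x hx).continuousAt).continuousWithinAt
  have hsign := hasDerivWithinAt_forall_lt_or_forall_gt_of_forall_ne hconv
    (f' := fun x => deriv g x)
    (fun x hx => ((hgdiff x hx).hasDerivAt.hasDerivWithinAt))
    (m := 0) hgderiv_ne
  have hinj : Set.InjOn g I := by
    rcases hsign with h | h
    · exact (strictAntiOn_of_deriv_neg hconv hgcont
        (fun x hx => h x (by rwa [hIopen.interior_eq] at hx))).injOn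
    · exact (strictMonoOn_of_deriv_pos hconv hgcont
        (fun x hx => h x (by rwa [hIopen.interior_eq] at hx))).injOn
  have hgx : g x₁ = g x₂ := by
    show p₂ x₁ * Y x₁ ^ 2 + p₁ x₁ * Y x₁ + p₀ x₁ = p₂ x₂ * Y x₂ ^ 2 + p₁ x₂ * Y x₂ + p₀ x₂
    rw [hY1, hY2]; exact hFeq1
  have hxeq : x₁ = x₂ := hinj hx₁ hx₂ hgx
  subst hxeq
  have hyeq : y₁ = y₂ := by
    have h1 : r₁ x₁ * y₁ + r₀ x₁ = r₁ x₁ * y₂ + r₀ x₁ := by rw [← hv, hv2]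
    have := hr1ne x₁ hx₁
    have : r₁ x₁ * y₁ = r₁ x₁ * y₂ := by linarith
    exact mul_left_cancel₀ (hr1ne x₁ hx₁) this
  rw [hyeq]

/-- Corollary 1. A `y`-quadratic real analytic non-singular map on the
strip `Σ = I × ℝ` such that either `p₂(x) ≠ 0` on `I` or `q₂(x) ≠ 0` on `I` is injective. -/
theorem quadratic_nonsingular_injective
    (I : Set ℝ) (hIopen : IsOpen I) (hIconn : IsPreconnected I)
    (p₀ p₁ p₂ q₀ q₁ q₂ : ℝ → ℝ)
    (hp₀ : AnalyticOnNhd ℝ p₀ I) (hp₁ : AnalyticOnNhd ℝ p₁ I) (hp₂ : AnalyticOnNhd ℝ p₂ I)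
    (hq₀ : AnalyticOnNhd ℝ q₀ I) (hq₁ : AnalyticOnNhd ℝ q₁ I) (hq₂ : AnalyticOnNhd ℝ q₂ I)
    (F : ℝ × ℝ → ℝ × ℝ)
    (hFdef : ∀ x y : ℝ,
      F (x, y) = (p₂ x * y ^ 2 + p₁ x * y + p₀ x, q₂ x * y ^ 2 + q₁ x * y + q₀ x))
    (hns : ∀ z ∈ I ×ˢ (univ : Set ℝ), (fderiv ℝ F z).det ≠ 0)
    (hlead : (∀ x ∈ I, p₂ x ≠ 0) ∨ (∀ x ∈ I, q₂ x ≠ 0)) :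
    Set.InjOn F (I ×ˢ (univ : Set ℝ)) := by
  have dp₀ : ∀ x ∈ I, DifferentiableAt ℝ p₀ x := fun x hx => (hp₀ x hx).differentiableAt
  have dp₁ : ∀ x ∈ I, DifferentiableAt ℝ p₁ x := fun x hx => (hp₁ x hx).differentiableAt
  have dp₂ : ∀ x ∈ I, DifferentiableAt ℝ p₂ x := fun x hx => (hp₂ x hx).differentiableAt
  have dq₀ : ∀ x ∈ I, DifferentiableAt ℝ q₀ x := fun x hx => (hq₀ x hx).differentiableAt
  have dq₁ : ∀ x ∈ I, DifferentiableAt ℝ q₁ x := fun x hx => (hq₁ x hx).differentiableAt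
  have dq₂ : ∀ x ∈ I, DifferentiableAt ℝ q₂ x := fun x hx => (hq₂ x hx).differentiableAt
  have hJ : ∀ x ∈ I, ∀ y : ℝ,
      (deriv p₂ x * y ^ 2 + deriv p₁ x * y + deriv p₀ x) * (2 * q₂ x * y + q₁ x)
      - (2 * p₂ x * y + p₁ x) * (deriv q₂ x * y ^ 2 + deriv q₁ x * y + deriv q₀ x) ≠ 0 := by
    intro x hx y
    have h := hns (x, y) (by exact ⟨hx, trivial⟩)
    rwa [quad_det p₀ p₁ p₂ q₀ q₁ q₂ F hFdef x y (dp₀ x hx) (dp₁ x hx) (dp₂ x hx)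
      (dq₀ x hx) (dq₁ x hx) (dq₂ x hx)] at h
  rcases hlead with hl | hl
  · exact key_injective I hIopen hIconn p₀ p₁ p₂ q₀ q₁ q₂ dp₀ dp₁ dp₂ dq₀ dq₁ dq₂ F hFdef hJ hl
  · -- swap the two components
    set F' : ℝ × ℝ → ℝ × ℝ := fun z => Prod.swap (F z) with hF'
    have hF'def : ∀ x y : ℝ,
        F' (x, y) = (q₂ x * y ^ 2 + q₁ x * y + q₀ x, p₂ x * y ^ 2 + p₁ x * y + p₀ x) := by
      intro x y; simp [hF', hFdef x y, Prod.swap]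
    have hJ' : ∀ x ∈ I, ∀ y : ℝ,
        (deriv q₂ x * y ^ 2 + deriv q₁ x * y + deriv q₀ x) * (2 * p₂ x * y + p₁ x)
        - (2 * q₂ x * y + q₁ x) * (deriv p₂ x * y ^ 2 + deriv p₁ x * y + deriv p₀ x) ≠ 0 := by
      intro x hx y h0
      exact hJ x hx y (by linarith)
    have hinj' := key_injective I hIopen hIconn q₀ q₁ q₂ p₀ p₁ p₂ dq₀ dq₁ dq₂ dp₀ dp₁ dp₂
      F' hF'def hJ' hl
    intro z₁ hz₁ z₂ hz₂ heq
    exact hinj' hz₁ hz₂ (by simp [hF', heq])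
end
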